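/- Let ≺ be a linear order on the terminal vertices of the or-gadget. If x₁ ≺ x₁', then after deleting the arcs e₂ and e₃ the resulting digraph is acyclic and admits a topological ordering whose restriction to the terminals equals ≺. -/

import Mathlib

/-!
Deleting `e₂` and `e₃` leaves `v₂ᵇ, v₃ᵇ` without incoming arcs and `v₂ᵃ, v₃ᵃ` without outgoing
ones. So list the sources `v₂ᵇ, v₃ᵇ` first, then the terminals in the order `≺` with the path
`v₁ᵃ → v₁ᵇ` inserted right after `x₁`, and the sinks `v₂ᵃ, v₃ᵃ` last. The only arcs not handled
by this block structure are `x₁ → v₁ᵃ → v₁ᵇ → x₁'`, and they go forward exactly because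
`x₁ ≺ x₁'`.
-/

/-- The vertices of the or-gadget: six terminals and six non-terminals. -/
inductive OrV : Type
  | x1 | x1' | x2 | x2' | x3 | x3'
  | v1a | v1b | v2a | v2b | v3a | v3b
deriving DecidableEq

open OrV

/-- The arcs of the or-gadget. -/
def orEdges : List (OrV × OrV) :=
  [(x1, v1a), (v1b, x1'), (x2, v2a), (v2b, x2'), (x3, v3a), (v3b, x3'),
   (v1a, v1b), (v2a, v2b), (v3a, v3b),
   (v1b, v2a), (v2b, v3a), (v3b, v1a),
   (v1b, v3a), (v2b, v1a), (v3b, v2a)]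

def orE (a b : OrV) : Prop := (a, b) ∈ orEdges

def nonTerminal : Set OrV := {v1a, v1b, v2a, v2b, v3a, v3b}

def terminal : Set OrV := {x1, x1', x2, x2', x3, x3'}

theorem Relation.not_transGen_self_of_lt {α β : Type*} [Preorder β] {R : α → α → Prop}
    (f : α → β) (hf : ∀ a b, R a b → f a < f b) (a : α) : ¬ Relation.TransGen R a a := by
  intro h
  have hlt : f a < f a := by
    simpa only [Relation.transGen_eq_self] using Relation.TransGen.lift f hf a a h
  exact lt_irrefl _ hlt

def orEReduced (a b : OrV) : Prop :=
  orE a b ∧ (a, b) ≠ (v2a, v2b) ∧ (a, b) ≠ (v3a, v3b)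

/-- Residues mod 3 keep `v₁ᵃ, v₁ᵇ` apart from the terminals. -/
def orRank (r : OrV → ℕ) : OrV → ℕ
  | x1 => 3 * r x1 + 2
  | x1' => 3 * r x1' + 2
  | x2 => 3 * r x2 + 2
  | x2' => 3 * r x2' + 2
  | x3 => 3 * r x3 + 2
  | x3' => 3 * r x3' + 2
  | v1a => 3 * r x1 + 3
  | v1b => 3 * r x1 + 4
  | v2b => 0
  | v3b => 1
  | v2a => 3 * (r x1 + r x1' + r x2 + r x2' + r x3 + r x3') + 5
  | v3a => 3 * (r x1 + r x1' + r x2 + r x2' + r x3 + r x3') + 6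

theorem orRank_of_mem_terminal (r : OrV → ℕ) {t : OrV} (ht : t ∈ terminal) :
    orRank r t = 3 * r t + 2 := by
  rcases ht with rfl | rfl | rfl | rfl | rfl | rfl <;> rfl

theorem orRank_lt_of_orEReduced (r : OrV → ℕ) (h1 : r x1 < r x1') {a b : OrV}
    (hab : orEReduced a b) : orRank r a < orRank r b := by
  obtain ⟨hab, h2, h3⟩ := hab
  suffices ∀ p ∈ orEdges, p ≠ (v2a, v2b) → p ≠ (v3a, v3b) → orRank r p.1 < orRank r p.2 from
    this (a, b) hab h2 h3
  simp only [orEdges, List.forall_mem_cons, List.not_mem_nil, IsEmpty.forall_iff, implies_true,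
    and_true, ne_eq, not_true_eq_false, true_and, orRank]
  and_intros <;> intros <;> omega

theorem orRank_injective (r : OrV → ℕ) (hr : Set.InjOn r terminal) :
    Function.Injective (orRank r) := by
  intro a b hab
  have : a = b ∨ (a ∈ terminal ∧ b ∈ terminal ∧ r a = r b) := by
    cases a <;> cases b <;> simp only [orRank] at hab <;>
      first
      | exact .inl rfl
      | omega
      | exact .inr ⟨by simp [terminal], by simp [terminal], by omega⟩
  rcases this with rfl | ⟨ha, hb, hrab⟩
  · rfl
  · exact hr ha hb hrab

/-- If a linear order on the terminals (given by an injective ranking `r`) has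
`x1 ≺ x1'`, then deleting arcs `e₂, e₃` makes the or-gadget acyclic, with a topological
ordering whose restriction to the terminals is the given order. -/
theorem orGadget_extend_ordering (r : OrV → ℕ) (hr : Set.InjOn r terminal)
    (h1 : r x1 < r x1') :
    (∀ v : OrV, ¬ Relation.TransGen
      (fun a b => orE a b ∧ (a, b) ≠ (v2a, v2b) ∧ (a, b) ≠ (v3a, v3b)) v v) ∧
    ∃ ρ : OrV → ℕ, Function.Injective ρ ∧
      (∀ a b, orE a b → (a, b) ≠ (v2a, v2b) → (a, b) ≠ (v3a, v3b) → ρ a < ρ b) ∧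
      (∀ s ∈ terminal, ∀ t ∈ terminal, (ρ s < ρ t ↔ r s < r t)) := by
  have hlt : ∀ a b, orEReduced a b → orRank r a < orRank r b :=
    fun _ _ => orRank_lt_of_orEReduced r h1
  refine ⟨Relation.not_transGen_self_of_lt (orRank r) hlt, orRank r, orRank_injective r hr,
    fun a b hab h2 h3 => hlt a b ⟨hab, h2, h3⟩, fun s hs t ht => ?_⟩
  rw [orRank_of_mem_terminal r hs, orRank_of_mem_terminal r ht]
  omega
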